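/- Let N > n, Δ ⊆ S_{n,N}, σ : Δ → ℝ, and take β = 1 and the quadratic Hamiltonian H(φ) = ½∑_{x∈Λ_{n,N}} φ_x². For η : Λ_{n,N} ∪ Δ → ℕ define D(φ, η) = ∏_{y∈Δ} σ(y)^{η_y} · ∏_{x∈Λ_{n,N}} h_{η_x}(φ_x). Let 𝓛 = ∑_{unordered nearest-neighbor pairs {x,y} ⊆ Λ_{n,N}} 𝓛_{x,y} + ∑_{x∈Λ_{n,N}} ∑_{y∈Δ, y∼x} 𝓛̄_{x,y}, where 𝓛_{x,y}f(η) = η_x(f(η^{x,y}) − f(η)) + η_y(f(η^{y,x}) − f(η)), 𝓛̄_{x,y}f(η) = η_x(f(η^{x,y}) − f(η)), and η^{x,y} denotes η with one particle moved from site x to site y. Then for every φ ∈ ℝ^{Λ_{n,N}} and every η, (L D(·, η))(φ) = (𝓛 D(φ, ·))(η). -/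

import Mathlib

open Finset

/-- A point of the `d = k+1` dimensional lattice `ℤ^d`, written as
(first coordinate, remaining `k` coordinates). -/
abbrev Pt (k : ℕ) := ℤ × (Fin k → ℤ)

/-- Nearest neighbors: `|x - y| = 1` (ℓ¹-distance one). -/
def isNN {k : ℕ} (x y : Pt k) : Prop :=
  |x.1 - y.1| + ∑ i, |x.2 i - y.2 i| = 1

instance {k : ℕ} (x y : Pt k) : Decidable (isNN x y) := by
  unfold isNN; infer_instance

/-- The domain 𝒞 = {x₁ ≥ n} ∪ {x₁ ≤ -n} ∪ C_n. -/
def inC (k n : ℕ) (x : Pt k) : Prop :=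
  (n : ℤ) ≤ x.1 ∨ x.1 ≤ -(n : ℤ) ∨ (|x.1| ≤ (n : ℤ) ∧ ∀ i, |x.2 i| ≤ (n : ℤ))

instance (k n : ℕ) : DecidablePred (inC k n) := fun x => by
  unfold inC; infer_instance

/-- The `2(k+1)` nearest neighbors of `x` in `ℤ^{k+1}`. -/
def nbrFinset {k : ℕ} (x : Pt k) : Finset (Pt k) :=
  {(x.1 + 1, x.2), (x.1 - 1, x.2)} ∪
    (Finset.univ : Finset (Fin k × Bool)).image
      (fun p => (x.1, Function.update x.2 p.1 (x.2 p.1 + if p.2 then 1 else -1)))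

/-- ψ is harmonic on 𝒞: for every x ∈ 𝒞, the sum of ψ(y) − ψ(x) over
nearest neighbors y of x lying in 𝒞 vanishes. -/
def HarmonicOnC (k n : ℕ) (ψ : Pt k → ℝ) : Prop :=
  ∀ x : Pt k, inC k n x →
    ∑ y ∈ (nbrFinset x).filter (fun y => inC k n y), (ψ y - ψ x) = 0

/-- The flux through the section Σ_ξ of the channel. -/
noncomputable def flux (k n : ℕ) (ψ : Pt k → ℝ) (ξ : ℤ) : ℝ :=
  ∑ v ∈ Fintype.piFinset (fun _ : Fin k => Finset.Icc (-(n : ℤ)) (n : ℤ)),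
    (ψ (ξ - 1, v) - ψ (ξ, v))

/-- The finite volume Λ_{n,N} = 𝒞 ∩ [−N, N]^d, as a finite set. -/
noncomputable def Lam (k n N : ℕ) : Finset (Pt k) :=
  ((Finset.Icc (-(N : ℤ)) (N : ℤ)) ×ˢ
      Fintype.piFinset (fun _ : Fin k => Finset.Icc (-(N : ℤ)) (N : ℤ))).filter
    (inC k n)

/-- The shell S_{n,N} = Λ_{n,N+1} \ Λ_{n,N}. -/
noncomputable def Sshell (k n N : ℕ) : Finset (Pt k) := Lam k n (N + 1) \ Lam k n N

/-- `u` is harmonic in Λ_{n,N} with boundary condition σ on Δ: it agrees with σ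
on Δ and for every x ∈ Λ_{n,N},
∑_{y ∈ Λ, y∼x} (u x − u y) + ∑_{y ∈ Δ, y∼x} (u x − σ y) = 0. -/
def HarmBC (k n N : ℕ) (Δ : Finset (Pt k)) (σ : Pt k → ℝ) (u : Pt k → ℝ) : Prop :=
  (∀ y ∈ Δ, u y = σ y) ∧
  ∀ x ∈ Lam k n N,
    (∑ y ∈ (Lam k n N).filter (fun y => isNN x y), (u x - u y)) +
      (∑ y ∈ Δ.filter (fun y => isNN x y), (u x - σ y)) = 0

open MeasureTheory

/-- Partial derivative ∂f/∂φ_x of a function of finitely many real variables. -/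
noncomputable def pd {ι : Type*} [Fintype ι] [DecidableEq ι]
    (f : (ι → ℝ) → ℝ) (x : ι) (φ : ι → ℝ) : ℝ :=
  fderiv ℝ f φ (Pi.single x 1)

/-- The bond operator
L_{x,y} f = −(∂H/∂φ_x − ∂H/∂φ_y)(∂f/∂φ_x − ∂f/∂φ_y) + β⁻¹(∂/∂φ_x − ∂/∂φ_y)² f. -/
noncomputable def Lxy {ι : Type*} [Fintype ι] [DecidableEq ι] (β : ℝ)
    (H : (ι → ℝ) → ℝ) (x y : ι) (f : (ι → ℝ) → ℝ) (φ : ι → ℝ) : ℝ :=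
  -((pd H x φ - pd H y φ) * (pd f x φ - pd f y φ)) +
    β⁻¹ * (pd (pd f x) x φ - pd (pd f x) y φ - pd (pd f y) x φ + pd (pd f y) y φ)

/-- The boundary operator
L̄_{x} f = −(∂H/∂φ_x − s) ∂f/∂φ_x + β⁻¹ ∂²f/∂φ_x², with chemical potential s. -/
noncomputable def Lbar {ι : Type*} [Fintype ι] [DecidableEq ι] (β : ℝ)
    (H : (ι → ℝ) → ℝ) (x : ι) (s : ℝ) (f : (ι → ℝ) → ℝ) (φ : ι → ℝ) : ℝ :=
  -((pd H x φ - s) * pd f x φ) + β⁻¹ * pd (pd f x) x φ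

/-- The full generator L = ∑_{{x,y}⊆Λ, x∼y} L_{x,y} + ∑_{x∈Λ}∑_{y∈Δ, y∼x} L̄_{x,y},
the first (unordered-pair) sum realized as half the ordered double sum, the
summand being symmetric in (x,y). -/
noncomputable def Gen (k n N : ℕ) (β : ℝ) (Δ : Finset (Pt k)) (σ : Pt k → ℝ)
    (H : (↥(Lam k n N) → ℝ) → ℝ) (f : (↥(Lam k n N) → ℝ) → ℝ)
    (φ : ↥(Lam k n N) → ℝ) : ℝ :=
  (1 / 2) * (∑ x : ↥(Lam k n N), ∑ y : ↥(Lam k n N),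
      if isNN (x : Pt k) (y : Pt k) then Lxy β H x y f φ else 0) +
    ∑ x : ↥(Lam k n N), ∑ y ∈ Δ.filter (fun y => isNN (x : Pt k) y),
      Lbar β H x (σ y) f φ

open Polynomial

/-- The probabilist's Hermite polynomial h_m, evaluated at ξ ∈ ℝ. -/
noncomputable def Her (m : ℕ) (ξ : ℝ) : ℝ := aeval ξ (hermite m)

/-- The duality function
D(φ,η) = ∏_{y∈Δ} σ(y)^{η_y} · ∏_{x∈Λ_{n,N}} h_{η_x}(φ_x). -/
noncomputable def Dfun (k n N : ℕ) (Δ : Finset (Pt k)) (σ : Pt k → ℝ)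
    (φ : ↥(Lam k n N) → ℝ) (η : Pt k → ℕ) : ℝ :=
  (∏ y ∈ Δ, σ y ^ η y) * ∏ x : ↥(Lam k n N), Her (η x) (φ x)

/-- η with one particle moved from site x to site y. -/
def move {k : ℕ} (η : Pt k → ℕ) (x y : Pt k) : Pt k → ℕ := fun z =>
  if z = y then η y + 1 else if z = x then η x - 1 else η z

/-- The dual generator
𝓛 = ∑_{{x,y}⊆Λ, x∼y} 𝓛_{x,y} + ∑_{x∈Λ}∑_{y∈Δ, y∼x} 𝓛̄_{x,y} acting on
η ↦ D(φ,η), with 𝓛_{x,y}f(η) = η_x(f(η^{x,y})−f(η)) + η_y(f(η^{y,x})−f(η))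
and 𝓛̄_{x,y}f(η) = η_x(f(η^{x,y})−f(η)); the unordered-pair sum is realized as
half the ordered double sum, the summand being symmetric in (x,y). -/
noncomputable def dualGen (k n N : ℕ) (Δ : Finset (Pt k)) (σ : Pt k → ℝ)
    (φ : ↥(Lam k n N) → ℝ) (η : Pt k → ℕ) : ℝ :=
  (1 / 2) * (∑ x : ↥(Lam k n N), ∑ y : ↥(Lam k n N),
      if isNN (x : Pt k) (y : Pt k) then
        (η (x : Pt k) : ℝ) *
            (Dfun k n N Δ σ φ (move η x y) - Dfun k n N Δ σ φ η) +
          (η (y : Pt k) : ℝ) *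
            (Dfun k n N Δ σ φ (move η y x) - Dfun k n N Δ σ φ η)
      else 0) +
    ∑ x : ↥(Lam k n N), ∑ y ∈ Δ.filter (fun y => isNN (x : Pt k) y),
      (η (x : Pt k) : ℝ) *
        (Dfun k n N Δ σ φ (move η (x : Pt k) y) - Dfun k n N Δ σ φ η)

/-!
Write `D(φ, η) = c ∏_x h_{η_x}(φ_x)`. Since `h_m' = m h_{m-1}`, a derivative `∂_x` lowers
`η_x` by one with weight `η_x`; since `ξ h_m = h_{m+1} + m h_{m-1}`, multiplication by `φ_y`
splits into raising `η_y` and lowering it with weight `η_y`. In `L_{x,y} D` (where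
`∂H/∂φ_x = φ_x`) the lowering parts of the drift terms cancel the second-order terms exactly;
what remains of `-φ_x ∂_x D` is `-η_x D`, and of `φ_y ∂_x D` it is `η_x D(φ, η^{x,y})`.
The boundary operator is the same computation with `φ_y` replaced by `σ(y)`, which `D`
records as the extra factor `σ(y)^{η_y + 1}`.
-/

open Polynomial Function

theorem Polynomial.derivative_hermite (m : ℕ) :
    derivative (hermite m) = (m : ℤ[X]) * hermite (m - 1) := by
  induction m with
  | zero => simp
  | succ m ih =>
    rw [hermite_succ, derivative_sub, derivative_mul, derivative_X, one_mul, ih]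
    cases m with
    | zero => simp
    | succ m =>
      have hd : derivative ((↑(m + 1) : ℤ[X]) * hermite m) =
          (↑(m + 1) : ℤ[X]) * derivative (hermite m) := by
        rw [derivative_mul]; simp
      simp only [Nat.add_sub_cancel, hd]
      push_cast
      linear_combination (-(m : ℤ[X]) - 1) * hermite_succ m

theorem hasDerivAt_Her (m : ℕ) (ξ : ℝ) : HasDerivAt (Her m) (m * Her (m - 1) ξ) ξ := by
  have h := (hermite m).hasDerivAt_aeval ξ
  rwa [derivative_hermite, map_mul, map_natCast] at h

theorem mul_Her (m : ℕ) (ξ : ℝ) : ξ * Her m ξ = Her (m + 1) ξ + m * Her (m - 1) ξ := by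
  simp only [Her, hermite_succ, map_sub, map_mul, aeval_X, derivative_hermite, map_natCast]
  ring

section HermiteProduct

variable {ι : Type*} [Fintype ι] [DecidableEq ι]

noncomputable def hermiteProd (m : ι → ℕ) (ψ : ι → ℝ) : ℝ := ∏ z, Her (m z) (ψ z)

theorem hermiteProd_update (m : ι → ℕ) (x : ι) (i : ℕ) (ψ : ι → ℝ) :
    hermiteProd (update m x i) ψ = Her i (ψ x) * ∏ z ∈ univ.erase x, Her (m z) (ψ z) := by
  rw [hermiteProd, ← mul_prod_erase univ _ (mem_univ x), update_self]
  congr 1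
  exact prod_congr rfl fun z hz => by rw [update_of_ne (ne_of_mem_erase hz)]

theorem mul_hermiteProd (m : ι → ℕ) (x : ι) (ψ : ι → ℝ) :
    ψ x * hermiteProd m ψ =
      hermiteProd (update m x (m x + 1)) ψ + m x * hermiteProd (update m x (m x - 1)) ψ := by
  conv_lhs => rw [← update_eq_self x m]
  rw [hermiteProd_update, hermiteProd_update, hermiteProd_update, ← mul_assoc, mul_Her]
  ring

theorem natCast_mul_hermiteProd_update_pred_succ (m : ι → ℕ) (x : ι) (ψ : ι → ℝ) :
    (m x : ℝ) * hermiteProd (update m x (m x - 1 + 1)) ψ = m x * hermiteProd m ψ := by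
  rcases Nat.eq_zero_or_pos (m x) with h | h
  · simp [h]
  · rw [Nat.sub_add_cancel h, update_eq_self]

theorem pd_const_mul (c : ℝ) (f : (ι → ℝ) → ℝ) (x : ι) :
    pd (fun ψ => c * f ψ) x = fun φ => c * pd f x φ := by
  funext φ
  simp only [pd, ← smul_eq_mul, ← Pi.smul_def, fderiv_const_smul_field, Pi.smul_apply,
    FunLike.coe_smul]

theorem pd_hermiteProd (m : ι → ℕ) (x : ι) :
    pd (hermiteProd m) x = fun φ => m x * hermiteProd (update m x (m x - 1)) φ := by
  funext φ
  have hfactor (z : ι) : HasFDerivAt (fun ψ : ι → ℝ => Her (m z) (ψ z))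
      ((m z * Her (m z - 1) (φ z)) • ContinuousLinearMap.proj (R := ℝ) z) φ :=
    (hasDerivAt_Her _ _).comp_hasFDerivAt φ (hasFDerivAt_apply z φ)
  have hderiv := HasFDerivAt.finsetProd (u := univ) fun z _ => hfactor z
  rw [pd, show hermiteProd m = fun ψ => ∏ z, Her (m z) (ψ z) from rfl, hderiv.fderiv,
    hermiteProd_update]
  simp only [FunLike.coe_sum, Finset.sum_apply, FunLike.coe_smul,
    Pi.smul_apply, ContinuousLinearMap.proj_apply, smul_eq_mul]
  rw [sum_eq_single x (fun z _ hz => by simp [hz.symm]) (by simp), Pi.single_eq_same]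
  ring

theorem pd_const_mul_hermiteProd (c : ℝ) (m : ι → ℕ) (x : ι) :
    pd (fun ψ => c * hermiteProd m ψ) x =
      fun φ => c * m x * hermiteProd (update m x (m x - 1)) φ := by
  rw [pd_const_mul, pd_hermiteProd]
  simp only [mul_assoc]

end HermiteProduct

section QuadraticGenerator

variable {ι : Type*} [Fintype ι] [DecidableEq ι]

theorem pd_half_sum_sq (x : ι) (φ : ι → ℝ) :
    pd (fun ψ : ι → ℝ => 1 / 2 * ∑ z, ψ z ^ 2) x φ = φ x := by
  have hsq (z : ι) := (hasFDerivAt_apply (𝕜 := ℝ) z φ).pow 2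
  simp only [pd_const_mul]
  rw [pd, (HasFDerivAt.fun_sum fun z _ => hsq z).fderiv]
  simp only [FunLike.coe_sum, Finset.sum_apply, FunLike.coe_smul, Pi.smul_apply,
    ContinuousLinearMap.proj_apply, smul_eq_mul, nsmul_eq_mul]
  rw [sum_eq_single x (fun z _ hz => by simp [hz.symm]) (by simp), Pi.single_eq_same]
  ring

theorem Lxy_half_sum_sq_hermiteProd (c : ℝ) (m : ι → ℕ) {x y : ι} (hxy : x ≠ y)
    (φ : ι → ℝ) :
    Lxy 1 (fun ψ => 1 / 2 * ∑ z, ψ z ^ 2) x y (fun ψ => c * hermiteProd m ψ) φ =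
      m x * (c * hermiteProd (update (update m x (m x - 1)) y (m y + 1)) φ -
          c * hermiteProd m φ) +
        m y * (c * hermiteProd (update (update m y (m y - 1)) x (m x + 1)) φ -
          c * hermiteProd m φ) := by
  have hxLx := mul_hermiteProd (update m x (m x - 1)) x φ
  have hyLx := mul_hermiteProd (update m x (m x - 1)) y φ
  have hxLy := mul_hermiteProd (update m y (m y - 1)) x φ
  have hyLy := mul_hermiteProd (update m y (m y - 1)) y φ
  simp only [update_self, update_idem, update_of_ne hxy, update_of_ne hxy.symm]
    at hxLx hyLx hxLy hyLy
  simp only [Lxy, pd_half_sum_sq, pd_const_mul_hermiteProd, update_self, update_idem,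
    update_of_ne hxy, update_of_ne hxy.symm, inv_one, one_mul]
  linear_combination (-c * m x) * hxLx + (c * m x) * hyLx + (c * m y) * hxLy - (c * m y) * hyLy
    - c * natCast_mul_hermiteProd_update_pred_succ m x φ
    - c * natCast_mul_hermiteProd_update_pred_succ m y φ

theorem Lbar_half_sum_sq_hermiteProd (c s : ℝ) (m : ι → ℕ) (x : ι) (φ : ι → ℝ) :
    Lbar 1 (fun ψ => 1 / 2 * ∑ z, ψ z ^ 2) x s (fun ψ => c * hermiteProd m ψ) φ =
      m x * (s * c * hermiteProd (update m x (m x - 1)) φ - c * hermiteProd m φ) := by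
  have hxLx := mul_hermiteProd (update m x (m x - 1)) x φ
  simp only [update_self, update_idem] at hxLx
  simp only [Lbar, pd_half_sum_sq, pd_const_mul_hermiteProd, update_self, update_idem,
    inv_one, one_mul]
  linear_combination (-c * m x) * hxLx - c * natCast_mul_hermiteProd_update_pred_succ m x φ

end QuadraticGenerator

section Model

variable {k n N : ℕ} {Δ : Finset (Pt k)} (σ : Pt k → ℝ) (φ : ↥(Lam k n N) → ℝ) (η : Pt k → ℕ)

theorem ne_of_isNN {x y : Pt k} (h : isNN x y) : x ≠ y := by
  rintro rfl
  simp [isNN] at h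

theorem Dfun_eq_mul_hermiteProd :
    (fun ψ => Dfun k n N Δ σ ψ η) =
      fun ψ => (∏ w ∈ Δ, σ w ^ η w) * hermiteProd (fun z : ↥(Lam k n N) => η z) ψ :=
  rfl

theorem prod_pow_move_of_mem_Lam (hΔ : ∀ w ∈ Δ, w ∉ Lam k n N) {x y : Pt k}
    (hx : x ∈ Lam k n N) (hy : y ∈ Lam k n N) :
    ∏ w ∈ Δ, σ w ^ move η x y w = ∏ w ∈ Δ, σ w ^ η w :=
  prod_congr rfl fun w hw => by
    have hwx : w ≠ x := fun h => hΔ w hw (h ▸ hx)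
    have hwy : w ≠ y := fun h => hΔ w hw (h ▸ hy)
    simp [move, hwx, hwy]

theorem prod_pow_move_of_mem_boundary (hΔ : ∀ w ∈ Δ, w ∉ Lam k n N) {x y : Pt k}
    (hx : x ∈ Lam k n N) (hy : y ∈ Δ) :
    ∏ w ∈ Δ, σ w ^ move η x y w = σ y * ∏ w ∈ Δ, σ w ^ η w := by
  rw [← mul_prod_erase Δ _ hy, ← mul_prod_erase Δ (fun w => σ w ^ η w) hy, ← mul_assoc,
    ← pow_succ']
  congr 1
  · simp [move]
  · refine prod_congr rfl fun w hw => ?_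
    have hwx : w ≠ x := fun h => hΔ w (mem_of_mem_erase hw) (h ▸ hx)
    simp [move, ne_of_mem_erase hw, hwx]

theorem Dfun_move_of_mem_Lam (hΔ : ∀ w ∈ Δ, w ∉ Lam k n N) (x y : ↥(Lam k n N)) :
    Dfun k n N Δ σ φ (move η x y) =
      (∏ w ∈ Δ, σ w ^ η w) * hermiteProd
        (update (update (fun z : ↥(Lam k n N) => η z) x (η x - 1)) y (η y + 1)) φ := by
  rw [Dfun, prod_pow_move_of_mem_Lam σ η hΔ x.2 y.2]
  congr 2 with z
  congr 1
  simp only [move, update_apply, Subtype.coe_inj]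

theorem Dfun_move_of_mem_boundary (hΔ : ∀ w ∈ Δ, w ∉ Lam k n N) (x : ↥(Lam k n N))
    {y : Pt k} (hy : y ∈ Δ) :
    Dfun k n N Δ σ φ (move η x y) =
      σ y * (∏ w ∈ Δ, σ w ^ η w) *
        hermiteProd (update (fun z : ↥(Lam k n N) => η z) x (η x - 1)) φ := by
  rw [Dfun, prod_pow_move_of_mem_boundary σ η hΔ x.2 hy]
  congr 2 with z
  have hzy : (z : Pt k) ≠ y := fun h => hΔ y hy (h ▸ z.2)
  congr 1
  simp only [move, update_apply, Subtype.coe_inj, hzy, if_false]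

end Model

theorem quadratic_duality_general (k n N : ℕ)
    (Δ : Finset (Pt k)) (hΔS : Δ ⊆ Sshell k n N) (σ : Pt k → ℝ)
    (φ : ↥(Lam k n N) → ℝ) (η : Pt k → ℕ) :
    Gen k n N 1 Δ σ (fun ψ => (1 / 2) * ∑ x : ↥(Lam k n N), (ψ x) ^ 2)
        (fun ψ => Dfun k n N Δ σ ψ η) φ =
      dualGen k n N Δ σ φ η := by
  have hΔ : ∀ w ∈ Δ, w ∉ Lam k n N := fun w hw => (mem_sdiff.1 (hΔS hw)).2
  rw [Gen, dualGen, Dfun_eq_mul_hermiteProd]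
  refine congrArg₂ (fun A B => 1 / 2 * A + B) ?_ ?_
  · refine sum_congr rfl fun x _ => sum_congr rfl fun y _ => ?_
    split_ifs with hNN
    · have hxy : x ≠ y := fun h => ne_of_isNN hNN (congrArg Subtype.val h)
      rw [Lxy_half_sum_sq_hermiteProd _ _ hxy, Dfun_move_of_mem_Lam σ φ η hΔ x y,
        Dfun_move_of_mem_Lam σ φ η hΔ y x]
      rfl
    · rfl
  · refine sum_congr rfl fun x _ => sum_congr rfl fun y hy => ?_
    rw [Lbar_half_sum_sq_hermiteProd,
      Dfun_move_of_mem_boundary σ φ η hΔ x (mem_filter.1 hy).1]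
    rfl

/-- Duality for the quadratic Ginzburg–Landau model (β = 1,
H(φ) = ½∑φ_x²): for every configuration φ and every dual particle
configuration η, (L D(·,η))(φ) = (𝓛 D(φ,·))(η). -/
theorem quadratic_duality (k n N : ℕ) (hn : 1 ≤ n) (hN : n < N)
    (Δ : Finset (Pt k)) (hΔS : Δ ⊆ Sshell k n N) (σ : Pt k → ℝ)
    (φ : ↥(Lam k n N) → ℝ) (η : Pt k → ℕ) :
    Gen k n N 1 Δ σ (fun ψ => (1 / 2) * ∑ x : ↥(Lam k n N), (ψ x) ^ 2)
        (fun ψ => Dfun k n N Δ σ ψ η) φ =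
      dualGen k n N Δ σ φ η :=
  quadratic_duality_general k n N Δ hΔS σ φ η
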